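/- For every continuous conical function f : E → ℝ and every ε > 0 there exist a continuous conical function g : E → ℝ, finitely many closed convex cones σ_1, …, σ_m whose union is E, and vectors s_1, …, s_m ∈ ℚ^d ⊆ E such that g(x) = ⟪s_i, x⟫ for all x ∈ σ_i (1 ≤ i ≤ m), and |f(x) − g(x)| ≤ ε‖x‖ for all x ∈ E. That is, rational piecewise linear conical functions are dense in the space of continuous conical functions with respect to the C-norm. -/

import Mathlib

/-!
On the unit sphere, which is compact, the lattice version of the Stone–Weierstrass theorem makes
maxima and minima of linear forms uniformly dense among continuous functions: a single linear form
takes any two prescribed values at two unit vectors that are neither equal nor antipodal, and at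
antipodal points one maximum or minimum of two forms does. Since `f` and such a max–min expression
are both conical, an error `ε` on the sphere is an error `ε‖x‖` everywhere. Moving the slopes of
the linear forms to nearby rational vectors changes the expression by at most that distance times
`‖x‖`, and a max–min expression of rational forms is rational piecewise linear: on a common piece
of two such functions, their maximum is cut by the half-space comparing the two forms.
-/

open Set

noncomputable section

/-- `f` is conical: positively homogeneous of degree 1. -/
def Conical (d : ℕ) (f : EuclideanSpace ℝ (Fin d) → ℝ) : Prop :=
  ∀ c : ℝ, 0 ≤ c → ∀ x, f (c • x) = c * f x

/-- The rational point of `ℝ^d` with coordinates `q`. -/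
noncomputable def ratToE (d : ℕ) (q : Fin d → ℚ) : EuclideanSpace ℝ (Fin d) :=
  (WithLp.equiv 2 (Fin d → ℝ)).symm fun i => (q i : ℝ)

open scoped RealInnerProductSpace

section Cones

variable {F : Type*} [NormedAddCommGroup F] [InnerProductSpace ℝ F]

def IsClosedConvexCone (σ : Set F) : Prop :=
  IsClosed σ ∧ Convex ℝ σ ∧ ∀ c : ℝ, 0 ≤ c → ∀ x ∈ σ, c • x ∈ σ

theorem isClosedConvexCone_univ : IsClosedConvexCone (univ : Set F) :=
  ⟨isClosed_univ, convex_univ, fun _ _ _ _ => mem_univ _⟩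

theorem isClosedConvexCone_setOf_inner_le (u v : F) :
    IsClosedConvexCone {x : F | ⟪u, x⟫ ≤ ⟪v, x⟫} := by
  have hset : {x : F | ⟪u, x⟫ ≤ ⟪v, x⟫} = {x | 0 ≤ ⟪v - u, x⟫} := by
    ext x; simp [inner_sub_left]
  rw [hset]
  refine ⟨isClosed_le continuous_const (continuous_const.inner continuous_id),
    convex_halfSpace_ge (innerₛₗ ℝ (v - u)).isLinear 0, fun c hc x hx => ?_⟩
  change 0 ≤ ⟪v - u, c • x⟫
  rw [real_inner_smul_right]
  exact mul_nonneg hc hx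

theorem IsClosedConvexCone.inter {σ τ : Set F} (hσ : IsClosedConvexCone σ)
    (hτ : IsClosedConvexCone τ) : IsClosedConvexCone (σ ∩ τ) :=
  ⟨hσ.1.inter hτ.1, hσ.2.1.inter hτ.2.1,
    fun c hc x hx => ⟨hσ.2.2 c hc x hx.1, hτ.2.2 c hc x hx.2⟩⟩

end Cones

section RationalPiecewiseLinear

variable {d : ℕ}

theorem ratToE_neg (q : Fin d → ℚ) : ratToE d (-q) = -ratToE d q := by
  ext i
  exact Rat.cast_neg (q i)

theorem denseRange_ratToE (d : ℕ) : DenseRange (ratToE d) :=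
  (PiLp.homeomorph 2 fun _ : Fin d => ℝ).symm.surjective.denseRange.comp
    (DenseRange.piMap fun _ => Rat.denseRange_cast) (PiLp.continuous_toLp 2 _)

def IsRatPiecewiseLinear (d : ℕ) (g : EuclideanSpace ℝ (Fin d) → ℝ) : Prop :=
  ∃ m : ℕ, ∃ σ : Fin m → Set (EuclideanSpace ℝ (Fin d)), ∃ s : Fin m → (Fin d → ℚ),
    (∀ i, IsClosedConvexCone (σ i)) ∧ (⋃ i, σ i) = univ ∧
      ∀ i, ∀ x ∈ σ i, g x = ⟪ratToE d (s i), x⟫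

namespace IsRatPiecewiseLinear

variable {g g₁ g₂ : EuclideanSpace ℝ (Fin d) → ℝ}

theorem of_fintype {ι : Type*} [Fintype ι] (σ : ι → Set (EuclideanSpace ℝ (Fin d)))
    (s : ι → Fin d → ℚ) (hσ : ∀ i, IsClosedConvexCone (σ i)) (hcov : (⋃ i, σ i) = univ)
    (hg : ∀ i, ∀ x ∈ σ i, g x = ⟪ratToE d (s i), x⟫) : IsRatPiecewiseLinear d g :=
  let e := (Fintype.equivFin ι).symm
  ⟨_, σ ∘ e, s ∘ e, fun _ => hσ _, by rw [← hcov]; exact e.surjective.iUnion_comp σ, fun _ => hg _⟩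

theorem inner (q : Fin d → ℚ) : IsRatPiecewiseLinear d fun x => ⟪ratToE d q, x⟫ :=
  ⟨1, fun _ => univ, fun _ => q, fun _ => isClosedConvexCone_univ, iUnion_const _,
    fun _ _ _ => rfl⟩

theorem neg (hg : IsRatPiecewiseLinear d g) : IsRatPiecewiseLinear d (-g) := by
  obtain ⟨m, σ, s, hσ, hcov, hgσ⟩ := hg
  refine ⟨m, σ, fun i => -s i, hσ, hcov, fun i x hx => ?_⟩
  rw [Pi.neg_apply, hgσ i x hx, ratToE_neg, inner_neg_left]

theorem sup (h₁ : IsRatPiecewiseLinear d g₁) (h₂ : IsRatPiecewiseLinear d g₂) :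
    IsRatPiecewiseLinear d (g₁ ⊔ g₂) := by
  obtain ⟨m₁, σ, s, hσ, hσcov, hgσ⟩ := h₁
  obtain ⟨m₂, τ, t, hτ, hτcov, hgτ⟩ := h₂
  let larger : Fin m₁ × Fin m₂ × Bool → Fin d → ℚ := fun p => bif p.2.2 then s p.1 else t p.2.1
  let smaller : Fin m₁ × Fin m₂ × Bool → Fin d → ℚ := fun p => bif p.2.2 then t p.2.1 else s p.1
  refine of_fintype
    (fun p => σ p.1 ∩ τ p.2.1 ∩ {x | ⟪ratToE d (smaller p), x⟫ ≤ ⟪ratToE d (larger p), x⟫})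
    larger (fun p => ((hσ _).inter (hτ _)).inter (isClosedConvexCone_setOf_inner_le _ _)) ?_ ?_
  · refine eq_univ_of_forall fun x => ?_
    obtain ⟨i, hi⟩ := mem_iUnion.1 (hσcov ▸ mem_univ x)
    obtain ⟨j, hj⟩ := mem_iUnion.1 (hτcov ▸ mem_univ x)
    rcases le_total ⟪ratToE d (t j), x⟫ ⟪ratToE d (s i), x⟫ with h | h
    · exact mem_iUnion.2 ⟨(i, j, true), ⟨hi, hj⟩, h⟩
    · exact mem_iUnion.2 ⟨(i, j, false), ⟨hi, hj⟩, h⟩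
  · rintro ⟨i, j, b⟩ x ⟨⟨hi, hj⟩, hx⟩
    rw [Pi.sup_apply, hgσ i x hi, hgτ j x hj]
    cases b
    · exact max_eq_right hx
    · exact max_eq_left hx

theorem inf (h₁ : IsRatPiecewiseLinear d g₁) (h₂ : IsRatPiecewiseLinear d g₂) :
    IsRatPiecewiseLinear d (g₁ ⊓ g₂) := by
  simpa only [neg_sup, neg_neg] using (h₁.neg.sup h₂.neg).neg

end IsRatPiecewiseLinear

end RationalPiecewiseLinear

section MaxMinLinear

variable {F : Type*} [NormedAddCommGroup F] [InnerProductSpace ℝ F]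

inductive IsMaxMinLinear (K : Set F) : (F → ℝ) → Prop
  | inner {v : F} : v ∈ K → IsMaxMinLinear K fun x => ⟪v, x⟫
  | sup {g₁ g₂ : F → ℝ} : IsMaxMinLinear K g₁ → IsMaxMinLinear K g₂ → IsMaxMinLinear K (g₁ ⊔ g₂)
  | inf {g₁ g₂ : F → ℝ} : IsMaxMinLinear K g₁ → IsMaxMinLinear K g₂ → IsMaxMinLinear K (g₁ ⊓ g₂)

namespace IsMaxMinLinear

variable {K : Set F} {g : F → ℝ}

theorem continuous (hg : IsMaxMinLinear K g) : Continuous g := by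
  induction hg with
  | inner _ => exact continuous_const.inner continuous_id
  | sup _ _ h₁ h₂ => exact h₁.sup h₂
  | inf _ _ h₁ h₂ => exact h₁.inf h₂

theorem exists_abs_sub_le_of_dense {K' : Set F} (hK' : Dense K') (hg : IsMaxMinLinear K g)
    {ε : ℝ} (hε : 0 < ε) : ∃ g', IsMaxMinLinear K' g' ∧ ∀ x, |g x - g' x| ≤ ε * ‖x‖ := by
  induction hg with
  | @inner v _ =>
    obtain ⟨w, hw, hvw⟩ := hK'.exists_dist_lt v hε
    refine ⟨_, .inner hw, fun x => ?_⟩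
    calc |⟪v, x⟫ - ⟪w, x⟫| = |⟪v - w, x⟫| := by rw [inner_sub_left]
      _ ≤ ‖v - w‖ * ‖x‖ := abs_real_inner_le_norm _ _
      _ ≤ ε * ‖x‖ := by rw [← dist_eq_norm]; gcongr
  | sup _ _ h₁ h₂ =>
    obtain ⟨g₁', hg₁', h₁⟩ := h₁
    obtain ⟨g₂', hg₂', h₂⟩ := h₂
    exact ⟨_, hg₁'.sup hg₂', fun x =>
      (abs_max_sub_max_le_max _ _ _ _).trans (max_le (h₁ x) (h₂ x))⟩
  | inf _ _ h₁ h₂ =>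
    obtain ⟨g₁', hg₁', h₁⟩ := h₁
    obtain ⟨g₂', hg₂', h₂⟩ := h₂
    exact ⟨_, hg₁'.inf hg₂', fun x =>
      (abs_min_sub_min_le_max _ _ _ _).trans (max_le (h₁ x) (h₂ x))⟩

end IsMaxMinLinear

end MaxMinLinear

section ConicalMaxMinLinear

variable {d : ℕ} {f g g₁ g₂ : EuclideanSpace ℝ (Fin d) → ℝ}

theorem conical_inner (v : EuclideanSpace ℝ (Fin d)) : Conical d fun x => ⟪v, x⟫ :=
  fun c _ x => real_inner_smul_right v x c

theorem Conical.sup (h₁ : Conical d g₁) (h₂ : Conical d g₂) : Conical d (g₁ ⊔ g₂) :=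
  fun c hc x => by simp only [Pi.sup_apply, h₁ c hc x, h₂ c hc x, mul_max_of_nonneg _ _ hc]

theorem Conical.inf (h₁ : Conical d g₁) (h₂ : Conical d g₂) : Conical d (g₁ ⊓ g₂) :=
  fun c hc x => by simp only [Pi.inf_apply, h₁ c hc x, h₂ c hc x, mul_min_of_nonneg _ _ hc]

theorem Conical.sub (hf : Conical d f) (hg : Conical d g) : Conical d (f - g) :=
  fun c hc x => by simp only [Pi.sub_apply, hf c hc x, hg c hc x, mul_sub]

theorem Conical.abs_le_mul_norm (hf : Conical d f) {ε : ℝ} (h : ∀ x, ‖x‖ = 1 → |f x| ≤ ε)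
    (x : EuclideanSpace ℝ (Fin d)) : |f x| ≤ ε * ‖x‖ := by
  rcases eq_or_ne x 0 with rfl | hx
  · simpa using hf 0 le_rfl 0
  · have hx' : ‖x‖ ≠ 0 := norm_ne_zero_iff.2 hx
    calc |f x| = ‖x‖ * |f (‖x‖⁻¹ • x)| := by
          rw [← abs_norm x, ← abs_mul, ← hf _ (norm_nonneg x), abs_norm, smul_inv_smul₀ hx']
      _ ≤ ‖x‖ * ε := by gcongr; exact h _ (norm_smul_inv_norm hx)
      _ = ε * ‖x‖ := mul_comm _ _

namespace IsMaxMinLinear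

variable {K : Set (EuclideanSpace ℝ (Fin d))}

theorem conical (hg : IsMaxMinLinear K g) : Conical d g := by
  induction hg with
  | inner _ => exact conical_inner _
  | sup _ _ h₁ h₂ => exact h₁.sup h₂
  | inf _ _ h₁ h₂ => exact h₁.inf h₂

theorem isRatPiecewiseLinear (hg : IsMaxMinLinear (range (ratToE d)) g) :
    IsRatPiecewiseLinear d g := by
  induction hg with
  | inner hv => obtain ⟨q, rfl⟩ := hv; exact .inner q
  | sup _ _ h₁ h₂ => exact h₁.sup h₂
  | inf _ _ h₁ h₂ => exact h₁.inf h₂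

end IsMaxMinLinear

end ConicalMaxMinLinear

section StoneWeierstrass

variable {F : Type*} [NormedAddCommGroup F] [InnerProductSpace ℝ F]

theorem exists_inner_eq_inner_eq {x y : F} (hx : ‖x‖ = 1) (hy : ‖y‖ = 1) (hxy : x ≠ y)
    (hxy' : x ≠ -y) (a b : ℝ) : ∃ v : F, ⟪v, x⟫ = a ∧ ⟪v, y⟫ = b := by
  set c := ⟪x, y⟫ with hc
  have hc₁ : c ≠ 1 := fun h => hxy ((inner_eq_one_iff_of_norm_eq_one hx hy).1 h)
  have hc₂ : c ≠ -1 := fun h => hxy' ((inner_eq_neg_one_iff_of_norm_eq_one hx hy).1 h)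
  have hdet : 1 - c ^ 2 ≠ 0 := by
    rw [show 1 - c ^ 2 = (1 - c) * (1 + c) by ring]
    exact mul_ne_zero (sub_ne_zero.2 hc₁.symm) fun h => hc₂ (by linarith)
  have hxx : ⟪x, x⟫ = 1 := by rw [real_inner_self_eq_norm_sq, hx, one_pow]
  have hyy : ⟪y, y⟫ = 1 := by rw [real_inner_self_eq_norm_sq, hy, one_pow]
  refine ⟨((a - b * c) / (1 - c ^ 2)) • x + ((b - a * c) / (1 - c ^ 2)) • y, ?_, ?_⟩ <;>
  · simp only [inner_add_left, real_inner_smul_left, hxx, hyy, real_inner_comm x y, ← hc]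
    field_simp
    ring

theorem exists_isMaxMinLinear_eq_eq {x y : F} (hx : ‖x‖ = 1) (hy : ‖y‖ = 1) (hxy : x ≠ y)
    (a b : ℝ) : ∃ g, IsMaxMinLinear univ g ∧ g x = a ∧ g y = b := by
  by_cases hxy' : x = -y
  · -- on the line through `x` and `y`, a linear form is odd, so a kink is needed
    subst hxy'
    have hlin : ∀ (r : ℝ) (z : F), IsMaxMinLinear univ fun x => ⟪r • z, x⟫ :=
      fun r z => .inner (mem_univ _)
    rcases le_total (-b) a with hab | hab
    · refine ⟨_, (hlin (-a) y).sup (hlin b y), ?_, ?_⟩ <;>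
      simp [real_inner_smul_left, hy, hab, neg_le.2 hab]
    · refine ⟨_, (hlin (-a) y).inf (hlin b y), ?_, ?_⟩ <;>
      simp [real_inner_smul_left, hy, hab, le_neg.1 hab]
  · obtain ⟨v, hvx, hvy⟩ := exists_inner_eq_inner_eq hx hy hxy hxy' a b
    exact ⟨_, .inner (mem_univ v), hvx, hvy⟩

theorem exists_isMaxMinLinear_abs_sub_le_on_sphere [FiniteDimensional ℝ F] {f : F → ℝ}
    (hf : Continuous f) {ε : ℝ} (hε : 0 < ε) :
    ∃ g, IsMaxMinLinear univ g ∧ ∀ x, ‖x‖ = 1 → |f x - g x| ≤ ε := by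
  let S := Metric.sphere (0 : F) 1
  let L : Set C(S, ℝ) := range fun g : {g : F → ℝ // IsMaxMinLinear univ g} =>
    (⟨g.1, g.2.continuous⟩ : C(F, ℝ)).restrict S
  have hsep : L.SeparatesPointsStrongly := by
    intro v x y
    by_cases hxy : x = y
    · subst hxy
      refine ⟨_, ⟨⟨_, .inner (mem_univ (v x • (x : F)))⟩, rfl⟩, ?_, ?_⟩ <;>
      simp [real_inner_smul_left, norm_eq_of_mem_sphere x]
    · obtain ⟨g, hg, hgx, hgy⟩ := exists_isMaxMinLinear_eq_eq (norm_eq_of_mem_sphere x)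
        (norm_eq_of_mem_sphere y) (Subtype.coe_injective.ne hxy) (v x) (v y)
      exact ⟨_, ⟨⟨g, hg⟩, rfl⟩, hgx, hgy⟩
  have hdense := ContinuousMap.sublattice_closure_eq_top L
    ⟨_, ⟨⟨_, .inner (mem_univ 0)⟩, rfl⟩⟩
    (by rintro _ ⟨g₁, rfl⟩ _ ⟨g₂, rfl⟩; exact ⟨⟨_, g₁.2.inf g₂.2⟩, rfl⟩)
    (by rintro _ ⟨g₁, rfl⟩ _ ⟨g₂, rfl⟩; exact ⟨⟨_, g₁.2.sup g₂.2⟩, rfl⟩) hsep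
  have hfS : (⟨f, hf⟩ : C(F, ℝ)).restrict S ∈ closure L := hdense ▸ mem_univ _
  obtain ⟨_, ⟨g, rfl⟩, hfg⟩ := Metric.mem_closure_iff.1 hfS ε hε
  refine ⟨g.1, g.2, fun x hx => ?_⟩
  have := (ContinuousMap.dist_apply_le_dist (⟨x, mem_sphere_zero_iff_norm.2 hx⟩ : S)).trans
    hfg.le
  rwa [Real.dist_eq] at this

end StoneWeierstrass

theorem stmt_16_general (d : ℕ)
    (f : EuclideanSpace ℝ (Fin d) → ℝ)
    (hc : Continuous f) (hcon : Conical d f) (ε : ℝ) (hε : 0 < ε) :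
    ∃ g : EuclideanSpace ℝ (Fin d) → ℝ, Continuous g ∧ Conical d g ∧
      ∃ m : ℕ, ∃ σ : Fin m → Set (EuclideanSpace ℝ (Fin d)), ∃ s : Fin m → (Fin d → ℚ),
        (∀ i, IsClosed (σ i) ∧ Convex ℝ (σ i) ∧
          ∀ c : ℝ, 0 ≤ c → ∀ x ∈ σ i, c • x ∈ σ i) ∧
        (⋃ i, σ i) = Set.univ ∧
        (∀ i, ∀ x ∈ σ i, g x = (inner ℝ (ratToE d (s i)) x : ℝ)) ∧
        (∀ x, |f x - g x| ≤ ε * ‖x‖) := by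
  obtain ⟨h, hh, hfh⟩ := exists_isMaxMinLinear_abs_sub_le_on_sphere hc (half_pos hε)
  have hfh' := (hcon.sub hh.conical).abs_le_mul_norm hfh
  obtain ⟨g, hg, hhg⟩ := hh.exists_abs_sub_le_of_dense (denseRange_ratToE d) (half_pos hε)
  obtain ⟨m, σ, s, hσ, hcov, hgσ⟩ := hg.isRatPiecewiseLinear
  refine ⟨g, hg.continuous, hg.conical, m, σ, s, hσ, hcov, hgσ, fun x => ?_⟩
  calc |f x - g x| ≤ |f x - h x| + |h x - g x| := abs_sub_le _ _ _
    _ ≤ ε / 2 * ‖x‖ + ε / 2 * ‖x‖ := add_le_add (hfh' x) (hhg x)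
    _ = ε * ‖x‖ := by ring

/-- Rational piecewise linear conical functions are dense, in the C-norm, in the space of
continuous conical functions: every continuous conical `f` is `ε‖·‖`-approximated by a
continuous conical `g` which is given by rational linear forms on finitely many closed
convex cones covering `ℝ^d`. -/
theorem stmt_16 (d : ℕ) (hd : 1 ≤ d)
    (f : EuclideanSpace ℝ (Fin d) → ℝ)
    (hc : Continuous f) (hcon : Conical d f) (ε : ℝ) (hε : 0 < ε) :
    ∃ g : EuclideanSpace ℝ (Fin d) → ℝ, Continuous g ∧ Conical d g ∧
      ∃ m : ℕ, ∃ σ : Fin m → Set (EuclideanSpace ℝ (Fin d)), ∃ s : Fin m → (Fin d → ℚ),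
        (∀ i, IsClosed (σ i) ∧ Convex ℝ (σ i) ∧
          ∀ c : ℝ, 0 ≤ c → ∀ x ∈ σ i, c • x ∈ σ i) ∧
        (⋃ i, σ i) = Set.univ ∧
        (∀ i, ∀ x ∈ σ i, g x = (inner ℝ (ratToE d (s i)) x : ℝ)) ∧
        (∀ x, |f x - g x| ≤ ε * ‖x‖) :=
  stmt_16_general d f hc hcon ε hε
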